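/- A maximal set of d^N + 1 mutually unbiased bases in dimension D = d^N cannot contain more than d^{⌊N/2⌋} + 1 fully separable bases, assuming at least one of the remaining basis vectors is k-uniform with k ≤ ⌊N/2⌋; more precisely, if m_sep vectors among the m = d^N(d^N+1) MUB vectors are fully separable and at least one remaining vector is k-uniform, then the number of fully separable bases b satisfies b ≤ d^k + 1. -/

import Mathlib

open Matrix BigOperators Finset Kronecker
open scoped ComplexOrder

noncomputable section

/-- The rank-one projector `|v⟩⟨v|`. -/
def proj {n : Type*} [Fintype n] (v : n → ℂ) : Matrix n n ℂ :=
  Matrix.of fun a b => v a * star (v b)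

/-- The inner product `⟨v|w⟩` on `n → ℂ`. -/
def inner' {n : Type*} [Fintype n] (v w : n → ℂ) : ℂ := ∑ i, star (v i) * w i

/-- A density matrix: positive semidefinite with unit trace. -/
def IsDensity {n : Type*} [Fintype n] [DecidableEq n] (ρ : Matrix n n ℂ) : Prop :=
  ρ.PosSemidef ∧ ρ.trace = 1


/-- Combine an assignment on a subset `S` of parties with one on its complement. -/
def combine {N d : ℕ} (S : Finset (Fin N)) (x : {i // i ∈ S} → Fin d)
    (z : {i // i ∉ S} → Fin d) : Fin N → Fin d :=
  fun i => if h : i ∈ S then x ⟨i, h⟩ else z ⟨i, h⟩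

/-- Partial trace of a multipartite matrix onto the subset `S` of parties. -/
def reduce {N d : ℕ} (S : Finset (Fin N)) (M : Matrix (Fin N → Fin d) (Fin N → Fin d) ℂ) :
    Matrix ({i // i ∈ S} → Fin d) ({i // i ∈ S} → Fin d) ℂ :=
  Matrix.of fun x y => ∑ z : {i // i ∉ S} → Fin d, M (combine S x z) (combine S y z)

/-- A `k`-uniform pure state: every reduction to `k` parties is maximally mixed. -/
def kUniform {N d : ℕ} (k : ℕ) (v : (Fin N → Fin d) → ℂ) : Prop :=
  ∀ S : Finset (Fin N), S.card = k → reduce S (proj v) = ((1:ℂ)/(d^k : ℂ)) • 1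

/-- A fully separable (product) multipartite pure state. -/
def FullySep {N d : ℕ} (v : (Fin N → Fin d) → ℂ) : Prop :=
  ∃ w : Fin N → Fin d → ℂ, ∀ x, v x = ∏ i, w i (x i)

/-!
A complete set of `D + 1` MUBs is a complex projective 2-design: its frame potential
`∑ r s, |⟨φ_r, φ_s⟩|⁴` equals `2 D (D + 1)`, and expanding the Frobenius distance between
`∑_r |φ_r ⊗ φ_r⟩⟨φ_r ⊗ φ_r|` and `1 + SWAP` shows that it vanishes. Feeding the design identity
into `tr ρ_S² = tr ((P ⊗ P) SWAP_S)`, the purities of the reductions of all `D (D + 1)` MUB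
vectors to a set `S` of parties with `c = d^|S|`, `e = d^(N - |S|)` sum to `D (c + e)`.
Each purity is at least `1 / c` (Cauchy–Schwarz on the diagonal of `ρ_S`) and a product vector
has purity `1`, so the excess purities `c tr ρ_S² - 1` of the `b` separable bases, `b D (c - 1)`,
are at most the total `D (c² - 1)`, whence `b ≤ c + 1`.
-/

lemma star_inner' {n : Type*} [Fintype n] (v w : n → ℂ) : star (inner' v w) = inner' w v := by
  simp [inner', mul_comm]

lemma inner'_self_eq_one_of_orthonormal {n κ : Type*} [Fintype n] [DecidableEq κ]
    {B : κ → n → ℂ} (horth : ∀ i j, inner' (B i) (B j) = if i = j then 1 else 0) (i : κ) :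
    inner' (B i) (B i) = 1 := by
  simpa using horth i i

section Design

variable {ι J : Type*} [Fintype ι] [Fintype J]

def tensorSquare (v : ι → ℂ) : ι × ι → ℂ := fun p => v p.1 * v p.2

lemma inner'_tensorSquare (u v : ι → ℂ) :
    inner' (tensorSquare u) (tensorSquare v) = inner' u v ^ 2 := by
  simp only [inner', tensorSquare, Fintype.sum_prod_type, sq, Finset.sum_mul_sum, star_mul']
  exact Finset.sum_congr rfl fun _ _ => Finset.sum_congr rfl fun _ _ => by ring

lemma trace_proj_mul_conjTranspose_proj (u v : ι → ℂ) :
    (proj u * (proj v)ᴴ).trace = inner' v u * inner' u v := by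
  simp only [Matrix.trace, Matrix.diag, mul_apply, conjTranspose_apply, proj, of_apply, inner',
    Finset.sum_mul_sum, star_mul', star_star]
  exact Finset.sum_congr rfl fun _ _ => Finset.sum_congr rfl fun _ _ => by ring

/-- A family of `D (D + 1)` unit vectors in `ℂ^D` is a 2-design iff this equals `idAddSwap`. -/
def secondMoment (φ : J → ι → ℂ) : Matrix (ι × ι) (ι × ι) ℂ :=
  ∑ r, proj (tensorSquare (φ r))

variable [DecidableEq ι] in
/-- Twice the projector onto the symmetric subspace of `ℂ^ι ⊗ ℂ^ι`. -/
def idAddSwap : Matrix (ι × ι) (ι × ι) ℂ :=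
  Matrix.of fun p q => (if p = q then 1 else 0) + (if q = p.swap then 1 else 0)

lemma trace_secondMoment_mul_conjTranspose_self (φ : J → ι → ℂ) :
    (secondMoment φ * (secondMoment φ)ᴴ).trace
      = ∑ r, ∑ r', ((‖inner' (φ r) (φ r')‖ ^ 4 : ℝ) : ℂ) := by
  simp only [secondMoment, conjTranspose_sum, Finset.sum_mul, Finset.mul_sum, trace_sum,
    trace_proj_mul_conjTranspose_proj, inner'_tensorSquare]
  refine Finset.sum_congr rfl fun r _ => Finset.sum_congr rfl fun r' _ => ?_
  rw [← star_inner', ← mul_pow, Complex.star_def, Complex.conj_mul', Complex.norm_conj]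
  push_cast; ring

variable [DecidableEq ι]

lemma trace_proj_tensorSquare_mul_idAddSwap (v : ι → ℂ) :
    (proj (tensorSquare v) * (idAddSwap : Matrix (ι × ι) (ι × ι) ℂ)ᴴ).trace
      = 2 * inner' v v ^ 2 := by
  simp only [Matrix.trace, Matrix.diag, mul_apply, conjTranspose_apply, proj, idAddSwap, of_apply,
    star_add, apply_ite star, star_one, star_zero, mul_add, mul_ite, mul_one, mul_zero,
    Finset.sum_add_distrib, Finset.sum_ite_eq', Finset.sum_ite_eq, Finset.mem_univ, if_true]
  have hsymm : ∀ p : ι × ι, tensorSquare v p.swap = tensorSquare v p := fun p =>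
    mul_comm _ _
  simp only [hsymm, ← two_mul]
  congr 1
  simp only [tensorSquare, inner', Fintype.sum_prod_type, sq, Finset.sum_mul_sum, star_mul']
  exact Finset.sum_congr rfl fun _ _ => Finset.sum_congr rfl fun _ _ => by ring

lemma trace_idAddSwap_mul_conjTranspose_self :
    ((idAddSwap : Matrix (ι × ι) (ι × ι) ℂ) * idAddSwapᴴ).trace
      = 2 * (Fintype.card ι : ℂ) ^ 2 + 2 * Fintype.card ι := by
  simp only [Matrix.trace, Matrix.diag, mul_apply, conjTranspose_apply, idAddSwap, of_apply,
    star_add, apply_ite star, star_one, star_zero, mul_add, mul_ite, mul_one, mul_zero,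
    Finset.sum_add_distrib, Finset.sum_ite_eq', Finset.sum_ite_eq, Finset.mem_univ, if_true]
  have hdiag : ∑ p : ι × ι, (if p = p.swap then (1 : ℂ) else 0) = Fintype.card ι := by
    have : ∀ p : ι × ι, p = p.swap ↔ p.1 = p.2 := fun p => by
      rw [Prod.ext_iff]; exact ⟨And.left, fun h => ⟨h, h.symm⟩⟩
    simp only [this, Fintype.sum_prod_type, Finset.sum_ite_eq, Finset.mem_univ, if_true,
      Finset.sum_const, Finset.card_univ, nsmul_eq_mul, mul_one]
  simp only [hdiag, Finset.sum_const, Finset.card_univ, Fintype.card_prod, nsmul_eq_mul]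
  push_cast; ring

end Design

lemma Matrix.eq_of_trace_mul_conjTranspose_eq {m n : Type*} [Fintype m] [Fintype n]
    {A C : Matrix m n ℂ} (hAA : (A * Aᴴ).trace = (C * Cᴴ).trace)
    (hAC : (A * Cᴴ).trace = (C * Cᴴ).trace) : A = C := by
  have hCA : (C * Aᴴ).trace = (C * Cᴴ).trace := by
    have hCA' : C * Aᴴ = (A * Cᴴ)ᴴ := by rw [conjTranspose_mul, conjTranspose_conjTranspose]
    rw [hCA', trace_conjTranspose, hAC, ← trace_conjTranspose, conjTranspose_mul,
      conjTranspose_conjTranspose]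
  rw [← sub_eq_zero, ← trace_mul_conjTranspose_self_eq_zero_iff, conjTranspose_sub, Matrix.sub_mul,
    Matrix.mul_sub, Matrix.mul_sub, trace_sub, trace_sub, trace_sub, hAA, hAC, hCA]
  ring

section MUB

variable {D : ℕ} {ι : Type*} [Fintype ι] {B : Fin (D + 1) → Fin D → ι → ℂ}

lemma sum_norm_inner'_pow_four_of_mub
    (horth : ∀ a i j, inner' (B a i) (B a j) = if i = j then 1 else 0)
    (hub : ∀ a b, a ≠ b → ∀ i j, ‖inner' (B a i) (B b j)‖ ^ 2 = 1 / (D : ℝ)) (a : Fin (D + 1))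
    (i : Fin D) : ∑ b, ∑ j, ‖inner' (B a i) (B b j)‖ ^ 4 = 2 := by
  have hD : (D : ℝ) ≠ 0 := Nat.cast_ne_zero.mpr (Fin.pos i).ne'
  have hsame : ∑ j, ‖inner' (B a i) (B a j)‖ ^ 4 = 1 := by
    simp [horth, apply_ite (‖·‖)]
  have hother : ∀ b ≠ a, ∑ j, ‖inner' (B a i) (B b j)‖ ^ 4 = 1 / D := fun b hb => by
    simp only [show (4 : ℕ) = 2 * 2 from rfl, pow_mul, hub a b hb.symm, Finset.sum_const,
      Finset.card_univ, Fintype.card_fin, nsmul_eq_mul]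
    field_simp
  rw [Fintype.sum_eq_add_sum_compl a, hsame, Finset.sum_congr rfl fun b hb =>
    hother b (Finset.mem_compl.mp hb ∘ Finset.mem_singleton.mpr), Finset.sum_const,
    Finset.card_compl, Finset.card_singleton, Fintype.card_fin, Nat.add_sub_cancel, nsmul_eq_mul]
  field_simp
  ring

theorem secondMoment_eq_idAddSwap_of_mub [DecidableEq ι] (hcard : Fintype.card ι = D)
    (horth : ∀ a i j, inner' (B a i) (B a j) = if i = j then 1 else 0)
    (hub : ∀ a b, a ≠ b → ∀ i j, ‖inner' (B a i) (B b j)‖ ^ 2 = 1 / (D : ℝ)) :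
    secondMoment (fun r : Fin (D + 1) × Fin D => B r.1 r.2) = idAddSwap := by
  have hC : ((idAddSwap : Matrix (ι × ι) (ι × ι) ℂ) * idAddSwapᴴ).trace
      = 2 * (((D : ℂ) + 1) * D) := by
    rw [trace_idAddSwap_mul_conjTranspose_self, hcard]; ring
  apply Matrix.eq_of_trace_mul_conjTranspose_eq
  · rw [trace_secondMoment_mul_conjTranspose_self, hC]
    norm_cast
    simp only [Fintype.sum_prod_type, sum_norm_inner'_pow_four_of_mub horth hub, Finset.sum_const,
      Finset.card_univ, Fintype.card_prod, Fintype.card_fin, nsmul_eq_mul]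
    push_cast; ring
  · simp only [secondMoment, Finset.sum_mul, trace_sum, trace_proj_tensorSquare_mul_idAddSwap,
      inner'_self_eq_one_of_orthonormal (horth _), Finset.sum_const, Finset.card_univ,
      Fintype.card_prod, Fintype.card_fin, hC, nsmul_eq_mul]
    push_cast; ring

theorem sum_mub_mul_mul_star_mul_star [DecidableEq ι] (hcard : Fintype.card ι = D)
    (horth : ∀ a i j, inner' (B a i) (B a j) = if i = j then 1 else 0)
    (hub : ∀ a b, a ≠ b → ∀ i j, ‖inner' (B a i) (B b j)‖ ^ 2 = 1 / (D : ℝ)) (p₁ p₂ q₁ q₂ : ι) :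
    ∑ a, ∑ i, B a i p₁ * B a i p₂ * star (B a i q₁) * star (B a i q₂)
      = (if p₁ = q₁ ∧ p₂ = q₂ then 1 else 0) + (if q₁ = p₂ ∧ q₂ = p₁ then 1 else 0) := by
  have := congrFun₂ (secondMoment_eq_idAddSwap_of_mub hcard horth hub) (p₁, p₂) (q₁, q₂)
  simp only [secondMoment, Matrix.sum_apply, proj, tensorSquare, of_apply, idAddSwap,
    Fintype.sum_prod_type, Prod.swap_prod_mk, Prod.mk.injEq, star_mul'] at this
  rw [← this]
  exact Finset.sum_congr rfl fun _ _ => Finset.sum_congr rfl fun _ _ => by ring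

end MUB

section Purity

variable {N d : ℕ}

def combineEquiv (S : Finset (Fin N)) :
    (({i // i ∈ S} → Fin d) × ({i // i ∉ S} → Fin d)) ≃ (Fin N → Fin d) :=
  (Equiv.piEquivPiSubtypeProd (· ∈ S) fun _ => Fin d).symm

lemma combine_inj {S : Finset (Fin N)} {x y : {i // i ∈ S} → Fin d}
    {z w : {i // i ∉ S} → Fin d} : combine S x z = combine S y w ↔ x = y ∧ z = w :=
  ((combineEquiv S).injective.eq_iff (a := (x, z)) (b := (y, w))).trans Prod.ext_iff

lemma sum_sum_combine {M : Type*} [AddCommMonoid M] (S : Finset (Fin N))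
    (F : (Fin N → Fin d) → M) : ∑ x, ∑ z, F (combine S x z) = ∑ p, F p := by
  rw [← (combineEquiv S).sum_comp, Fintype.sum_prod_type]
  rfl

lemma card_fun_mem (S : Finset (Fin N)) : Fintype.card ({i // i ∈ S} → Fin d) = d ^ S.card := by
  simp

lemma card_fun_notMem (S : Finset (Fin N)) :
    Fintype.card ({i // i ∉ S} → Fin d) = d ^ (N - S.card) := by
  simp [Fintype.card_subtype_compl]

lemma reduce_proj_apply (S : Finset (Fin N)) (v : (Fin N → Fin d) → ℂ) (x y) :
    reduce S (proj v) x y = ∑ z, v (combine S x z) * star (v (combine S y z)) := rfl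

lemma star_reduce_proj (S : Finset (Fin N)) (v : (Fin N → Fin d) → ℂ) (x y) :
    star (reduce S (proj v) x y) = reduce S (proj v) y x := by
  simp only [reduce_proj_apply, star_sum, star_mul', star_star, mul_comm]

lemma trace_reduce_proj (S : Finset (Fin N)) (v : (Fin N → Fin d) → ℂ) :
    ∑ x, reduce S (proj v) x x = inner' v v := by
  simp only [reduce_proj_apply, sum_sum_combine S fun p => v p * star (v p), inner', mul_comm]

/-- The purity `tr ρ_S²` of the reduction `ρ_S` of the pure state `v` to the parties in `S`. -/
def purity (S : Finset (Fin N)) (v : (Fin N → Fin d) → ℂ) : ℝ :=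
  ∑ x, ∑ y, Complex.normSq (reduce S (proj v) x y)

lemma ofReal_purity (S : Finset (Fin N)) (v : (Fin N → Fin d) → ℂ) :
    (purity S v : ℂ) = ∑ x, ∑ y, reduce S (proj v) x y * reduce S (proj v) y x := by
  simp only [purity, Complex.ofReal_sum]
  refine Finset.sum_congr rfl fun x _ => Finset.sum_congr rfl fun y _ => ?_
  rw [← star_reduce_proj S v x y, Complex.star_def, Complex.mul_conj]

lemma one_le_pow_card_mul_purity (S : Finset (Fin N)) {v : (Fin N → Fin d) → ℂ}
    (hv : inner' v v = 1) : 1 ≤ (d : ℝ) ^ S.card * purity S v := by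
  set ρ := reduce S (proj v)
  calc (1 : ℝ) = (∑ x, (ρ x x).re) ^ 2 := by
        rw [← Complex.re_sum, trace_reduce_proj, hv, Complex.one_re, one_pow]
    _ ≤ Fintype.card ({i // i ∈ S} → Fin d) * ∑ x, (ρ x x).re ^ 2 := by
        simpa using sq_sum_le_card_mul_sum_sq (s := Finset.univ) (f := fun x => (ρ x x).re)
    _ ≤ Fintype.card ({i // i ∈ S} → Fin d) * purity S v := by
        unfold purity
        gcongr with x
        rw [sq]
        exact (Complex.re_sq_le_normSq _).trans <| Finset.single_le_sum
          (f := fun y => Complex.normSq (ρ x y)) (fun _ _ => Complex.normSq_nonneg _)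
          (Finset.mem_univ x)
    _ = (d : ℝ) ^ S.card * purity S v := by rw [card_fun_mem]; push_cast; rfl

lemma purity_eq_one_of_combine_eq_mul (S : Finset (Fin N)) {v : (Fin N → Fin d) → ℂ}
    (hv : inner' v v = 1) (u : ({i // i ∈ S} → Fin d) → ℂ) (t : ({i // i ∉ S} → Fin d) → ℂ)
    (hvut : ∀ x z, v (combine S x z) = u x * t z) : purity S v = 1 := by
  set σ := ∑ z, t z * star (t z)
  have hρ : ∀ x y, reduce S (proj v) x y = u x * star (u y) * σ := fun x y => by
    simp only [reduce_proj_apply, hvut, star_mul', σ, Finset.mul_sum]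
    exact Finset.sum_congr rfl fun _ _ => by ring
  have htrace : ∑ x, u x * star (u x) * σ = 1 := by
    simp only [← hρ, trace_reduce_proj, hv]
  have : (purity S v : ℂ) = 1 := by
    calc (purity S v : ℂ) = ∑ x, ∑ y, u x * star (u x) * σ * (u y * star (u y) * σ) := by
          simp only [ofReal_purity, hρ]
          exact Finset.sum_congr rfl fun _ _ => Finset.sum_congr rfl fun _ _ => by ring
      _ = 1 := by rw [← Finset.sum_mul_sum, htrace, one_mul]
  exact_mod_cast this

lemma FullySep.exists_combine_eq_mul {v : (Fin N → Fin d) → ℂ} (hv : FullySep v)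
    (S : Finset (Fin N)) : ∃ (u : ({i // i ∈ S} → Fin d) → ℂ) (t : ({i // i ∉ S} → Fin d) → ℂ),
      ∀ x z, v (combine S x z) = u x * t z := by
  obtain ⟨w, hw⟩ := hv
  refine ⟨fun x => ∏ i : {i // i ∈ S}, w i (x i), fun z => ∏ i : {i // i ∉ S}, w i (z i),
    fun x z => ?_⟩
  have hx : ∀ i : {i // i ∈ S}, combine S x z i = x i := fun i => dif_pos i.2
  have hz : ∀ i : {i // i ∉ S}, combine S x z i = z i := fun i => dif_neg i.2
  rw [hw, ← Fintype.prod_subtype_mul_prod_subtype (· ∈ S)]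
  simp only [hx, hz]
  convert rfl

lemma purity_eq_one_of_fullySep (S : Finset (Fin N)) {v : (Fin N → Fin d) → ℂ}
    (hv : inner' v v = 1) (hsep : FullySep v) : purity S v = 1 := by
  obtain ⟨u, t, hvut⟩ := hsep.exists_combine_eq_mul S
  exact purity_eq_one_of_combine_eq_mul S hv u t hvut

theorem sum_purity_of_mub (S : Finset (Fin N))
    {B : Fin (d ^ N + 1) → Fin (d ^ N) → (Fin N → Fin d) → ℂ}
    (horth : ∀ a i j, inner' (B a i) (B a j) = if i = j then 1 else 0)
    (hub : ∀ a b, a ≠ b → ∀ i j, ‖inner' (B a i) (B b j)‖ ^ 2 = 1 / (d : ℝ) ^ N) :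
    ∑ a, ∑ i, purity S (B a i)
      = (d : ℝ) ^ S.card * ((d : ℝ) ^ (N - S.card)) ^ 2
        + ((d : ℝ) ^ S.card) ^ 2 * d ^ (N - S.card) := by
  have hdesign : ∀ x y z w, ∑ r : Fin (d ^ N + 1) × Fin (d ^ N),
      B r.1 r.2 (combine S x z) * star (B r.1 r.2 (combine S y z))
        * (B r.1 r.2 (combine S y w) * star (B r.1 r.2 (combine S x w)))
      = (if x = y then 1 else 0) + (if z = w then 1 else 0) := fun x y z w => by
    rw [Fintype.sum_prod_type]
    calc _ = ∑ a, ∑ i, B a i (combine S x z) * B a i (combine S y w)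
          * star (B a i (combine S y z)) * star (B a i (combine S x w)) :=
          Finset.sum_congr rfl fun _ _ => Finset.sum_congr rfl fun _ _ => by ring
      _ = _ := by
          rw [sum_mub_mul_mul_star_mul_star (by simp) horth (by simpa using hub)]
          simp only [combine_inj, and_true, true_and]
          by_cases hxy : x = y <;> simp [hxy, eq_comm]
  have hpair : ∀ x y, ∑ r : Fin (d ^ N + 1) × Fin (d ^ N),
      reduce S (proj (B r.1 r.2)) x y * reduce S (proj (B r.1 r.2)) y x
      = (Fintype.card ({i // i ∉ S} → Fin d) : ℂ) ^ 2 * (if x = y then 1 else 0)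
        + Fintype.card ({i // i ∉ S} → Fin d) := fun x y => by
    simp only [reduce_proj_apply, Finset.sum_mul_sum]
    rw [← Finset.sum_comm_cycle]
    simp only [hdesign, Finset.sum_add_distrib, Finset.sum_ite_eq, Finset.mem_univ, if_true,
      Finset.sum_const, Finset.card_univ, nsmul_eq_mul]
    ring
  have : ((∑ a, ∑ i, purity S (B a i) : ℝ) : ℂ) = (Fintype.card ({i // i ∈ S} → Fin d) : ℂ)
      * (Fintype.card ({i // i ∉ S} → Fin d) : ℂ) ^ 2 + (Fintype.card ({i // i ∈ S} → Fin d)) ^ 2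
      * Fintype.card ({i // i ∉ S} → Fin d) := by
    push_cast
    rw [← Fintype.sum_prod_type']
    simp only [ofReal_purity]
    rw [← Finset.sum_comm_cycle]
    simp only [hpair, Finset.sum_add_distrib, mul_ite, mul_one, mul_zero,
      Finset.sum_ite_eq, Finset.mem_univ, if_true, Finset.sum_const, Finset.card_univ,
      nsmul_eq_mul]
    ring
  rw [card_fun_mem, card_fun_notMem] at this
  exact_mod_cast this

end Purity

theorem card_fullySep_bases_le_pow_add_one {N d : ℕ} (S : Finset (Fin N)) (hS : 1 < d ^ S.card)
    {B : Fin (d ^ N + 1) → Fin (d ^ N) → (Fin N → Fin d) → ℂ}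
    (horth : ∀ a i j, inner' (B a i) (B a j) = if i = j then 1 else 0)
    (hub : ∀ a b, a ≠ b → ∀ i j, ‖inner' (B a i) (B b j)‖ ^ 2 = 1 / (d : ℝ) ^ N)
    {SepB : Finset (Fin (d ^ N + 1))} (hsep : ∀ a ∈ SepB, ∀ i, FullySep (B a i)) :
    SepB.card ≤ d ^ S.card + 1 := by
  set c : ℝ := d ^ S.card
  set e : ℝ := d ^ (N - S.card)
  have hD : (d : ℝ) ^ N = c * e := by
    rw [← pow_add, Nat.add_sub_cancel' (by simpa using S.card_le_univ)]
  have hc : 1 < c := by unfold c; exact_mod_cast hS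
  have hd : 0 < d := Nat.pos_of_ne_zero <| by
    rintro rfl; exact hS.not_ge (pow_le_one₀ le_rfl zero_le_one)
  have he : 0 < e := by positivity
  have hnorm := fun a i => inner'_self_eq_one_of_orthonormal (horth a) i
  -- the excess purity `c * purity - 1` is nonnegative, and equal to `c - 1` on product vectors
  have key : (SepB.card : ℝ) * (c * e * (c - 1)) ≤ (c + 1) * (c * e * (c - 1)) := calc
    _ = ∑ a ∈ SepB, ∑ i, (c * purity S (B a i) - 1) := by
      rw [Finset.sum_congr rfl fun a ha => Finset.sum_congr rfl fun i _ => by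
        rw [purity_eq_one_of_fullySep S (hnorm a i) (hsep a ha i)]]
      simp only [Finset.sum_const, Finset.card_univ, Fintype.card_fin, nsmul_eq_mul]
      push_cast; rw [hD]; ring
    _ ≤ ∑ a, ∑ i, (c * purity S (B a i) - 1) :=
      Finset.sum_le_sum_of_subset_of_nonneg (Finset.subset_univ _) fun a _ _ =>
        Finset.sum_nonneg fun i _ => sub_nonneg.2 (one_le_pow_card_mul_purity S (hnorm a i))
    _ = (c + 1) * (c * e * (c - 1)) := by
      simp only [Finset.sum_sub_distrib, ← Finset.mul_sum, sum_purity_of_mub S horth hub,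
        Finset.sum_const, Finset.card_univ, Fintype.card_fin, nsmul_eq_mul]
      push_cast; rw [hD]; ring
  have hb : (SepB.card : ℝ) ≤ c + 1 :=
    le_of_mul_le_mul_right key (mul_pos (mul_pos (by linarith) he) (by linarith))
  rw [← Nat.cast_le (α := ℝ)]
  push_cast
  exact hb

theorem stmt_10_general (N d k : ℕ) (hd : 2 ≤ d) (hk : 1 ≤ k) (hk2 : 2 * k ≤ N)
    (B : Fin (d^N + 1) → Fin (d^N) → (Fin N → Fin d) → ℂ)
    (horth : ∀ a i j, inner' (B a i) (B a j) = if i = j then 1 else 0)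
    (hub : ∀ a b, a ≠ b → ∀ i j, ‖inner' (B a i) (B b j)‖^2 = 1/((d:ℝ)^N))
    (SepB : Finset (Fin (d^N + 1)))
    (hsep : ∀ a ∈ SepB, ∀ i, FullySep (B a i)) :
    SepB.card ≤ d^k + 1 := by
  obtain ⟨S, -, hS⟩ := Finset.exists_subset_card_eq (s := Finset.univ (α := Fin N)) (n := k)
    (by simp only [Finset.card_univ, Fintype.card_fin]; omega)
  have hdS : 1 < d ^ S.card := by rw [hS]; exact Nat.one_lt_pow (by omega) (by omega)
  simpa only [hS] using card_fullySep_bases_le_pow_add_one S hdS horth hub hsep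

/-- A maximal set of `d^N + 1` MUBs in dimension `d^N` whose remaining part contains a
`k`-uniform vector has at most `d^k + 1` fully separable bases. -/
theorem stmt_10 (N d k : ℕ) (hN : 1 ≤ N) (hd : 2 ≤ d) (hk : 1 ≤ k) (hk2 : 2 * k ≤ N)
    (B : Fin (d^N + 1) → Fin (d^N) → (Fin N → Fin d) → ℂ)
    (horth : ∀ a i j, inner' (B a i) (B a j) = if i = j then 1 else 0)
    (hub : ∀ a b, a ≠ b → ∀ i j, ‖inner' (B a i) (B b j)‖^2 = 1/((d:ℝ)^N))
    (SepB : Finset (Fin (d^N + 1)))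
    (hsep : ∀ a ∈ SepB, ∀ i, FullySep (B a i))
    (hkuni : ∃ a, a ∉ SepB ∧ ∃ i, kUniform k (B a i)) :
    SepB.card ≤ d^k + 1 :=
  stmt_10_general N d k hd hk hk2 B horth hub SepB hsep
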